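/- Let Σ be a graded alphabet and t a tree in T_Σ. The sequential subtree automaton seq(A_t) associated with t is isomorphic (as an RWTA) to the quotient (A_t)_{∼_h} of the subtree automaton A_t by the relation ∼_h. -/

import Mathlib

/-- A tree over a graded alphabet `σ` with arity function `ar`. -/
inductive GTree (σ : Type) (ar : σ → ℕ) : Type
  | node (f : σ) (ts : Fin (ar f) → GTree σ ar) : GTree σ ar

/-- A root-weighted tree automaton (RWTA) over the graded alphabet `σ`
with weights in `M`. -/
structure RWTA (σ : Type) (ar : σ → ℕ) (M : Type) where
  Q : Type
  fin : Finite Q := by infer_instance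
  ν : Q → M
  δ : ∀ f : σ, (Fin (ar f) → Q) → Q → Prop

attribute [instance] RWTA.fin

variable {σ : Type} {ar : σ → ℕ} {M : Type}

/-- The reachability map `Δ_A`. -/
def RWTA.Delta (A : RWTA σ ar M) : GTree σ ar → Set A.Q
  | .node f ts => {q | ∃ qs : Fin (ar f) → A.Q,
      (∀ i, qs i ∈ A.Delta (ts i)) ∧ A.δ f qs q}

/-- The tree series realized by an RWTA: `P_A(t) = ν(Δ_A(t))`. -/
noncomputable def RWTA.P [AddCommMonoid M] (A : RWTA σ ar M) (t : GTree σ ar) : M :=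
  ∑ᶠ q ∈ A.Delta t, A.ν q

/-- An RWTA is sequential when `Card (Δ_A(t)) ≤ 1` for every tree. -/
def RWTA.Sequential (A : RWTA σ ar M) : Prop :=
  ∀ t : GTree σ ar, (A.Delta t).Subsingleton

/-- The down language of a state. -/
def RWTA.DownLang (A : RWTA σ ar M) (q : A.Q) : Set (GTree σ ar) :=
  {t | q ∈ A.Delta t}

/-- The sequential RWTA associated with `A` by the subset construction. -/
noncomputable def RWTA.subset [AddCommMonoid M] (A : RWTA σ ar M) : RWTA σ ar M where
  Q := Set A.Q
  ν := fun S => ∑ᶠ q ∈ S, A.ν q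
  δ := fun f Qs S =>
    S = {q | ∃ qs : Fin (ar f) → A.Q, (∀ i, qs i ∈ Qs i) ∧ A.δ f qs q}

/-- The accessible part of an RWTA. -/
def RWTA.acc (A : RWTA σ ar M) : RWTA σ ar M where
  Q := {q : A.Q // (A.DownLang q).Nonempty}
  ν := fun q => A.ν q.1
  δ := fun f qs q => A.δ f (fun i => (qs i).1) q.1

/-- The sum of two RWTAs (on the disjoint union of the state sets). -/
def RWTA.sum (A₁ A₂ : RWTA σ ar M) : RWTA σ ar M where
  Q := A₁.Q ⊕ A₂.Q
  ν := Sum.elim A₁.ν A₂.ν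
  δ := fun f qs q =>
    (∃ (qs' : Fin (ar f) → A₁.Q) (q' : A₁.Q),
        q = Sum.inl q' ∧ (∀ i, qs i = Sum.inl (qs' i)) ∧ A₁.δ f qs' q') ∨
    (∃ (qs' : Fin (ar f) → A₂.Q) (q' : A₂.Q),
        q = Sum.inr q' ∧ (∀ i, qs i = Sum.inr (qs' i)) ∧ A₂.δ f qs' q')

/-- The product of two RWTAs. -/
def RWTA.prod [Mul M] (A₁ A₂ : RWTA σ ar M) : RWTA σ ar M where
  Q := A₁.Q × A₂.Q
  ν := fun q => A₁.ν q.1 * A₂.ν q.2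
  δ := fun f qs q =>
    A₁.δ f (fun i => (qs i).1) q.1 ∧ A₂.δ f (fun i => (qs i).2) q.2

/-- The quotient of an RWTA by an equivalence relation on its states. -/
noncomputable def RWTA.quot [AddCommMonoid M] (A : RWTA σ ar M) (s : Setoid A.Q) :
    RWTA σ ar M where
  Q := Quotient s
  ν := fun C => ∑ᶠ q ∈ {q : A.Q | Quotient.mk s q = C}, A.ν q
  δ := fun f Cs C => ∃ (qs : Fin (ar f) → A.Q) (q : A.Q),
    (∀ i, Quotient.mk s (qs i) = Cs i) ∧ Quotient.mk s q = C ∧ A.δ f qs q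

/-- Relabelling of trees along a rank-preserving map of symbols. -/
def GTree.map {Γ : Type} {arΓ : Γ → ℕ} (g : σ → Γ) (hg : ∀ f, arΓ (g f) = ar f) :
    GTree σ ar → GTree Γ arΓ
  | .node f ts => .node (g f) (fun i => GTree.map g hg (ts (Fin.cast (hg f) i)))

/-- A morphism of RWTAs. -/
structure RWTA.Morphism {Γ : Type} {arΓ : Γ → ℕ}
    (A₁ : RWTA σ ar M) (A₂ : RWTA Γ arΓ M) where
  stateMap : A₁.Q → A₂.Q
  symMap : σ → Γ
  symRank : ∀ f, arΓ (symMap f) = ar f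
  transMap : ∀ (f : σ) (qs : Fin (ar f) → A₁.Q) (q : A₁.Q), A₁.δ f qs q →
    A₂.δ (symMap f) (fun i => stateMap (qs (Fin.cast (symRank f) i))) (stateMap q)
  weightMap : ∀ q, A₂.ν (stateMap q) = A₁.ν q

/-- Two RWTAs are isomorphic when there are mutually inverse morphisms between them. -/
def RWTA.Isomorphic {Γ : Type} {arΓ : Γ → ℕ}
    (A₁ : RWTA σ ar M) (A₂ : RWTA Γ arΓ M) : Prop :=
  ∃ (μ : A₁.Morphism A₂) (μ' : A₂.Morphism A₁),
    (∀ q, μ'.stateMap (μ.stateMap q) = q) ∧ (∀ q, μ.stateMap (μ'.stateMap q) = q) ∧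
    (∀ f, μ'.symMap (μ.symMap f) = f) ∧ (∀ f, μ.symMap (μ'.symMap f) = f)

/-- The size (number of nodes) of a tree. -/
def GTree.size : GTree σ ar → ℕ
  | .node _ ts => 1 + ∑ i, (ts i).size

/-- The set of subtrees of a tree. -/
def GTree.subTrees : GTree σ ar → Set (GTree σ ar)
  | .node f ts => insert (.node f ts) (⋃ i, (ts i).subTrees)

theorem GTree.subTrees_finite (t : GTree σ ar) : t.subTrees.Finite := by
  induction t with
  | node f ts ih => exact Set.Finite.insert _ (Set.finite_iUnion fun i => ih i)

-- `t.subCount s` is the number of occurrences of `s` as a subtree of `t`,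
-- i.e. `SubTreeSeries_t(s)`.
open Classical in
noncomputable def GTree.subCount : GTree σ ar → GTree σ ar → ℕ
  | .node f ts, s =>
      (if GTree.node f ts = s then 1 else 0) + ∑ i, (ts i).subCount s

/-- Indexing of the symbols of a tree by their position in a prefix traversal
(auxiliary function, threading the position of the root). -/
def GTree.sharpAux : GTree σ ar → ℕ → GTree (σ × ℕ) (fun p => ar p.1)
  | .node f ts, n => .node (f, n) (fun i =>
      (ts i).sharpAux (n + 1 + ∑ j : Fin (ar f), if j.1 < i.1 then (ts j).size else 0))

/-- `t^♯`: the tree `t` with each symbol indexed by its prefix-traversal position. -/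
def GTree.sharp (t : GTree σ ar) : GTree (σ × ℕ) (fun p => ar p.1) := t.sharpAux 0

/-- The map `h` dropping the indexes. -/
def GTree.unsharp : GTree (σ × ℕ) (fun p => ar p.1) → GTree σ ar :=
  GTree.map Prod.fst (fun _ => rfl)

/-- The subtree automaton `A_t` associated with a tree `t`. -/
def subtreeAut (t : GTree σ ar) : RWTA σ ar ℕ where
  Q := {r // r ∈ t.sharp.subTrees}
  fin := (t.sharp.subTrees_finite).to_subtype
  ν := fun _ => 1
  δ := fun f qs q => ∃ n : ℕ,
    (q : GTree (σ × ℕ) (fun p => ar p.1)) = .node (f, n) (fun i => (qs i : GTree (σ × ℕ) (fun p => ar p.1)))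

/-- The equivalence `∼_h` on the states of the subtree automaton. -/
def simH (t : GTree σ ar) : Setoid (subtreeAut t).Q :=
  Setoid.ker (fun r => GTree.unsharp r.1)

/-- The sequential subtree automaton `seq(A_t)` associated with a tree `t`. -/
noncomputable def seqSubtreeAut (t : GTree σ ar) : RWTA σ ar ℕ where
  Q := {r // r ∈ t.subTrees}
  fin := (t.subTrees_finite).to_subtype
  ν := fun r => t.subCount r.1
  δ := fun f qs q => (q : GTree σ ar) = .node f (fun i => (qs i : GTree σ ar))

/-- `SubTreeSet(L)`. -/
def subTreeSet (L : Set (GTree σ ar)) : Set (GTree σ ar) := ⋃ t ∈ L, t.subTrees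

/-- `SubTreeSeries_L`. -/
noncomputable def subSeriesL (L : Set (GTree σ ar)) (s : GTree σ ar) : ℕ :=
  ∑ᶠ t ∈ L, t.subCount s

/-- The sequential subtree automaton `A_L` associated with a finite tree language. -/
noncomputable def langSubtreeAut (L : Set (GTree σ ar)) (hL : L.Finite) : RWTA σ ar ℕ where
  Q := {r // r ∈ subTreeSet L}
  fin := (hL.biUnion fun t _ => t.subTrees_finite).to_subtype
  ν := fun r => subSeriesL L r.1
  δ := fun f qs q => (q : GTree σ ar) = .node f (fun i => (qs i : GTree σ ar))

/-!
Dropping indices maps the states of `A_t` (the subtrees of `t^♯`) onto the states of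
`seq(A_t)` (the subtrees of `t`), and the transitions of `A_t` onto those of `seq(A_t)`; so
`seq(A_t)` is the image of `A_t` under `h`, hence its quotient by the kernel `∼_h`, as soon as the
weights agree. The weight of the class over a subtree `s` of `t` counts the subtrees of `t^♯`
that become `s` once the indices are dropped. Prefix positions are pairwise distinct, so the
subtrees of `t^♯` are the occurrences of subtrees in `t`, and this count is `SubTreeSeries_t(s)`.
-/

theorem Fin.sum_ite_lt_add_le {k m : ℕ} (s : Fin k → ℕ) (i : Fin k) (hi : i.1 < m) :
    (∑ l, if l.1 < i.1 then s l else 0) + s i ≤ ∑ l, if l.1 < m then s l else 0 := by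
  calc (∑ l, if l.1 < i.1 then s l else 0) + s i
      = ∑ l, ((if l.1 < i.1 then s l else 0) + if l = i then s l else 0) := by
        rw [Finset.sum_add_distrib, Finset.sum_ite_eq' Finset.univ i s, if_pos (Finset.mem_univ i)]
    _ ≤ ∑ l, if l.1 < m then s l else 0 := by
        refine Finset.sum_le_sum fun l _ => ?_
        split_ifs with h₁ h₂ h₃ <;> (try subst h₂) <;> omega

theorem finsum_mem_setOf_val_one {α : Type*} (S : Set α) (p : α → Prop) [DecidablePred p] :
    ∑ᶠ x ∈ {x : S | p x}, (1 : ℕ) = ∑ᶠ a ∈ S, if p a then 1 else 0 := by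
  rw [finsum_mem_def, ← finsum_set_coe_eq_finsum_mem]
  congr 1
  ext x
  simp [Set.indicator_apply]

namespace GTree

variable {Γ : Type} {arΓ : Γ → ℕ}

def root : GTree σ ar → σ
  | .node f _ => f

theorem mem_subTrees_self (u : GTree σ ar) : u ∈ u.subTrees := by
  cases u with | node f ts => exact Set.mem_insert _ _

theorem mem_subTrees_node_of_mem {f : σ} {ts : Fin (ar f) → GTree σ ar} {i : Fin (ar f)}
    {s : GTree σ ar} (h : s ∈ (ts i).subTrees) : s ∈ (node f ts).subTrees :=
  Set.mem_insert_of_mem _ (Set.mem_iUnion.mpr ⟨i, h⟩)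

theorem subTrees_subset_of_mem {u s : GTree σ ar} (h : s ∈ u.subTrees) :
    s.subTrees ⊆ u.subTrees := by
  induction u with
  | node f ts ih =>
    rcases Set.mem_insert_iff.mp h with rfl | h
    · exact subset_rfl
    · obtain ⟨i, hi⟩ := Set.mem_iUnion.mp h
      exact fun _ hx => mem_subTrees_node_of_mem (ih i hi hx)

theorem mem_subTrees_of_node_mem {u : GTree σ ar} {f : σ} {ts : Fin (ar f) → GTree σ ar}
    (h : node f ts ∈ u.subTrees) (i : Fin (ar f)) : ts i ∈ u.subTrees :=
  subTrees_subset_of_mem h (mem_subTrees_node_of_mem (mem_subTrees_self _))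

theorem subTrees_map (g : σ → Γ) (hg : ∀ f, arΓ (g f) = ar f) (u : GTree σ ar) :
    (u.map g hg).subTrees = map g hg '' u.subTrees := by
  induction u with
  | node f ts ih =>
    rw [map, subTrees, subTrees, Set.image_insert_eq, Set.image_iUnion, ← map]
    congr 1
    simp only [ih]
    exact (finCongr (hg f)).surjective.iUnion_comp fun i => map g hg '' (ts i).subTrees

theorem unsharp_node (p : σ × ℕ) (rs : Fin (ar p.1) → GTree (σ × ℕ) (fun q => ar q.1)) :
    unsharp (node p rs) = node p.1 fun i => (rs i).unsharp :=
  rfl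

theorem unsharp_eq_node_iff {r : GTree (σ × ℕ) (fun p => ar p.1)} {f : σ}
    {ts : Fin (ar f) → GTree σ ar} :
    r.unsharp = node f ts ↔ ∃ n rs, r = node (f, n) rs ∧ ∀ i, (rs i).unsharp = ts i := by
  constructor
  · obtain ⟨⟨f', n⟩, rs⟩ := r
    intro h
    rw [unsharp_node] at h
    obtain ⟨rfl, hts⟩ := node.inj h
    exact ⟨n, rs, rfl, congrFun (eq_of_heq hts)⟩
  · rintro ⟨n, rs, rfl, hrs⟩
    exact congrArg (node f) (funext hrs)

theorem unsharp_sharpAux (u : GTree σ ar) (n : ℕ) : (u.sharpAux n).unsharp = u := by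
  induction u generalizing n with
  | node f ts ih => exact congrArg (node f) (funext fun i => ih i _)

theorem image_unsharp_subTrees_sharp (u : GTree σ ar) :
    unsharp '' u.sharp.subTrees = u.subTrees := by
  have h : (u.sharp.unsharp).subTrees = unsharp '' u.sharp.subTrees :=
    subTrees_map Prod.fst (fun _ => rfl) u.sharp
  rw [← h, sharp, unsharp_sharpAux]

/-- The prefix position at which the child `ts i` of `node f ts` starts, when the root sits at
position `n`. -/
def sharpOffset {f : σ} (ts : Fin (ar f) → GTree σ ar) (n : ℕ) (i : Fin (ar f)) : ℕ :=
  n + 1 + ∑ j, if j.1 < i.1 then (ts j).size else 0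

theorem sharpAux_node (f : σ) (ts : Fin (ar f) → GTree σ ar) (n : ℕ) :
    (node f ts).sharpAux n = node (f, n) fun i => (ts i).sharpAux (sharpOffset ts n i) :=
  rfl

theorem sharpOffset_add_size_le {f : σ} (ts : Fin (ar f) → GTree σ ar) (n : ℕ)
    {i j : Fin (ar f)} (hij : i < j) :
    sharpOffset ts n i + (ts i).size ≤ sharpOffset ts n j := by
  have := Fin.sum_ite_lt_add_le (fun l => (ts l).size) i hij
  unfold sharpOffset
  omega

theorem sharpOffset_add_size_le_size {f : σ} (ts : Fin (ar f) → GTree σ ar) (n : ℕ)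
    (i : Fin (ar f)) :
    sharpOffset ts n i + (ts i).size ≤ n + (node f ts).size := by
  have := Fin.sum_ite_lt_add_le (fun l => (ts l).size) i i.2
  simp only [Fin.is_lt, if_true] at this
  have hsize : (node f ts).size = 1 + ∑ l, (ts l).size := rfl
  unfold sharpOffset
  omega

theorem root_snd_mem_Ico_of_mem_sharpAux (u : GTree σ ar) (n : ℕ)
    {r : GTree (σ × ℕ) (fun p => ar p.1)} (hr : r ∈ (u.sharpAux n).subTrees) :
    r.root.2 ∈ Set.Ico n (n + u.size) := by
  induction u generalizing n r with
  | node f ts ih =>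
    rw [sharpAux_node] at hr
    rcases Set.mem_insert_iff.mp hr with rfl | hr
    · simp only [root, size, Set.mem_Ico]
      omega
    · obtain ⟨i, hi⟩ := Set.mem_iUnion.mp hr
      have hchild := Set.mem_Ico.mp (ih i _ hi)
      have hend := sharpOffset_add_size_le_size ts n i
      have hstart : n + 1 ≤ sharpOffset ts n i := Nat.le_add_right _ _
      rw [Set.mem_Ico]
      omega

theorem sharpAux_notMem_iUnion_subTrees (f : σ) (ts : Fin (ar f) → GTree σ ar) (n : ℕ) :
    (node f ts).sharpAux n ∉ ⋃ i, ((ts i).sharpAux (sharpOffset ts n i)).subTrees := by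
  intro h
  obtain ⟨i, hi⟩ := Set.mem_iUnion.mp h
  have := (Set.mem_Ico.mp (root_snd_mem_Ico_of_mem_sharpAux _ _ hi)).1
  simp only [sharpAux_node, root, sharpOffset] at this
  omega

theorem pairwise_disjoint_subTrees_sharpAux (f : σ) (ts : Fin (ar f) → GTree σ ar) (n : ℕ) :
    Pairwise fun i j => Disjoint ((ts i).sharpAux (sharpOffset ts n i)).subTrees
      ((ts j).sharpAux (sharpOffset ts n j)).subTrees := by
  suffices ∀ i j, i < j → Disjoint ((ts i).sharpAux (sharpOffset ts n i)).subTrees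
      ((ts j).sharpAux (sharpOffset ts n j)).subTrees by
    intro i j hij
    rcases hij.lt_or_gt with h | h
    exacts [this i j h, (this j i h).symm]
  intro i j hij
  refine Set.disjoint_left.mpr fun r hri hrj => ?_
  have hi := Set.mem_Ico.mp (root_snd_mem_Ico_of_mem_sharpAux _ _ hri)
  have hj := Set.mem_Ico.mp (root_snd_mem_Ico_of_mem_sharpAux _ _ hrj)
  have := sharpOffset_add_size_le ts n hij
  omega

open Classical in
theorem finsum_mem_subTrees_sharpAux (s u : GTree σ ar) (n : ℕ) :
    ∑ᶠ r ∈ (u.sharpAux n).subTrees, (if r.unsharp = s then 1 else 0 : ℕ) = u.subCount s := by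
  induction u generalizing n with
  | node f ts ih =>
    rw [sharpAux_node, subTrees, ← sharpAux_node,
      finsum_mem_insert _ (sharpAux_notMem_iUnion_subTrees f ts n)
        (Set.finite_iUnion fun i => subTrees_finite _),
      finsum_mem_iUnion (pairwise_disjoint_subTrees_sharpAux f ts n)
        (fun i => subTrees_finite _),
      finsum_eq_sum_of_fintype, unsharp_sharpAux, subCount]
    simp only [ih]

end GTree

open GTree

namespace RWTA

theorem Isomorphic.of_equiv {A₁ A₂ : RWTA σ ar M} (e : A₁.Q ≃ A₂.Q)
    (hδ : ∀ f qs q, A₂.δ f (e ∘ qs) (e q) ↔ A₁.δ f qs q) (hν : ∀ q, A₂.ν (e q) = A₁.ν q) :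
    A₁.Isomorphic A₂ :=
  ⟨{ stateMap := e, symMap := id, symRank := fun _ => rfl
     transMap := fun f qs q h => (hδ f qs q).2 h, weightMap := hν },
   { stateMap := e.symm, symMap := id, symRank := fun _ => rfl
     transMap := fun f qs q h => (hδ f (e.symm ∘ qs) (e.symm q)).1
       (by simpa only [Function.comp_def, Equiv.apply_symm_apply])
     weightMap := fun q => by rw [← hν, e.apply_symm_apply] },
   e.symm_apply_apply, e.apply_symm_apply, fun _ => rfl, fun _ => rfl⟩

/-- First isomorphism theorem for RWTAs. -/
theorem isomorphic_quot_ker [AddCommMonoid M] {A B : RWTA σ ar M} (φ : A.Q → B.Q)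
    (hφ : Function.Surjective φ)
    (hδ : ∀ f qs q, B.δ f qs q ↔ ∃ qs' q', (∀ i, φ (qs' i) = qs i) ∧ φ q' = q ∧ A.δ f qs' q')
    (hν : ∀ q, B.ν q = ∑ᶠ q' ∈ {q' | φ q' = q}, A.ν q') :
    B.Isomorphic (A.quot (Setoid.ker φ)) := by
  let e : B.Q ≃ (A.quot (Setoid.ker φ)).Q := (Setoid.quotientKerEquivOfSurjective φ hφ).symm
  have he : ∀ a b, Quotient.mk (Setoid.ker φ) a = e b ↔ φ a = b :=
    fun _ _ => Equiv.eq_symm_apply _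
  refine Isomorphic.of_equiv e (fun f qs q => ?_) (fun q => ?_)
  · exact (exists_congr fun qs' => exists_congr fun q' =>
      and_congr (forall_congr' fun i => he _ _) (and_congr (he _ _) Iff.rfl)).trans (hδ f qs q).symm
  · rw [hν]
    exact congrArg (fun S => ∑ᶠ a ∈ S, A.ν a) (Set.ext fun a => he a q)

end RWTA

def subtreeAut.toSeq (t : GTree σ ar) (r : (subtreeAut t).Q) : (seqSubtreeAut t).Q :=
  ⟨r.1.unsharp, image_unsharp_subTrees_sharp t ▸ Set.mem_image_of_mem _ r.2⟩

theorem subtreeAut.toSeq_surjective (t : GTree σ ar) :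
    Function.Surjective (subtreeAut.toSeq t) := by
  rintro ⟨s, hs⟩
  rw [← image_unsharp_subTrees_sharp] at hs
  obtain ⟨r, hr, rfl⟩ := hs
  exact ⟨⟨r, hr⟩, rfl⟩

theorem simH_eq_ker_toSeq (t : GTree σ ar) : simH t = Setoid.ker (subtreeAut.toSeq t) :=
  Setoid.ext fun a b => (Setoid.ker_def (f := subtreeAut.toSeq t) (x := a) (y := b)).trans
    Subtype.ext_iff |>.symm

theorem seqSubtreeAut_δ_iff (t : GTree σ ar) (f : σ) (qs : Fin (ar f) → (seqSubtreeAut t).Q)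
    (q : (seqSubtreeAut t).Q) :
    (seqSubtreeAut t).δ f qs q ↔ ∃ qs' q', (∀ i, subtreeAut.toSeq t (qs' i) = qs i) ∧
      subtreeAut.toSeq t q' = q ∧ (subtreeAut t).δ f qs' q' := by
  constructor
  · intro h
    obtain ⟨q', rfl⟩ := subtreeAut.toSeq_surjective t q
    obtain ⟨n, rs, hq', hrs⟩ := unsharp_eq_node_iff.mp h
    have hrs_mem : ∀ i, rs i ∈ t.sharp.subTrees := mem_subTrees_of_node_mem (hq' ▸ q'.2)
    exact ⟨fun i => ⟨rs i, hrs_mem i⟩, q', fun i => Subtype.ext (hrs i), rfl, n, hq'⟩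
  · rintro ⟨qs', q', hqs, rfl, n, hq'⟩
    show q'.1.unsharp = _
    rw [hq']
    exact congrArg (node f) (funext fun i => congrArg Subtype.val (hqs i))

open Classical in
theorem seqSubtreeAut_ν_eq (t : GTree σ ar) (q : (seqSubtreeAut t).Q) :
    (seqSubtreeAut t).ν q =
      ∑ᶠ q' ∈ {q' | subtreeAut.toSeq t q' = q}, (subtreeAut t).ν q' := by
  have hfiber : {q' | subtreeAut.toSeq t q' = q} = {q' : (subtreeAut t).Q | q'.1.unsharp = q.1} :=
    Set.ext fun _ => Subtype.ext_iff
  rw [hfiber]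
  exact (finsum_mem_subTrees_sharpAux q.1 t 0).symm.trans
    (finsum_mem_setOf_val_one _ fun r => unsharp r = q.1).symm

theorem seq_iso_quot {σ : Type} {ar : σ → ℕ} (t : GTree σ ar) :
    RWTA.Isomorphic (seqSubtreeAut t) ((subtreeAut t).quot (simH t)) := by
  rw [simH_eq_ker_toSeq]
  exact RWTA.isomorphic_quot_ker _ (subtreeAut.toSeq_surjective t) (seqSubtreeAut_δ_iff t)
    (seqSubtreeAut_ν_eq t)
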